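/- For every integer a and every root ρ of f_a, the field K_a = ℚ(ρ) is a degree 3 extension of ℚ which is Galois, and its Galois group Gal(K_a/ℚ) is cyclic of order 3, generated by the automorphism σ determined by σ(ρ) = -1 - 1/ρ. -/

import Mathlib

open IntermediateField

/-!
If `ρ` is a root of `f_a`, then so are `-1 - 1/ρ` and `-1/(ρ + 1)`: by `f_a(ρ) = 0`, the three
numbers have elementary symmetric functions `a`, `-(a + 3)`, `1`. So `f_a` splits in `ℚ(ρ)`, and
since `f_a` is irreducible over `ℚ` (a rational root would be an integer unit, and `f_a(±1) ≠ 0`),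
`ℚ(ρ)/ℚ` is Galois of degree 3. The automorphism sending `ρ` to `-1 - 1/ρ` is nontrivial, since
a fixed point would satisfy `ρ² + ρ + 1 = 0` and `3ρ = a`, forcing `a² + 3a + 9 = 0`; so it
generates the group of prime order 3.
-/

open Polynomial

namespace Polynomial

noncomputable def simplestCubic {R : Type*} [CommRing R] (a : R) : R[X] :=
  X ^ 3 - C a * X ^ 2 - C (a + 3) * X - 1

section CommRing

variable {R S : Type*} [CommRing R] [CommRing S]

theorem eval_simplestCubic (a x : R) :
    (simplestCubic a).eval x = x ^ 3 - a * x ^ 2 - (a + 3) * x - 1 := by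
  simp [simplestCubic]

theorem simplestCubic_map (f : R →+* S) (a : R) :
    (simplestCubic a).map f = simplestCubic (f a) := by
  simp [simplestCubic, map_ofNat]

theorem aeval_simplestCubic [Algebra R S] (a : R) (x : S) :
    aeval x (simplestCubic a) = (simplestCubic (algebraMap R S a)).eval x := by
  rw [aeval_def, eval₂_eq_eval_map, simplestCubic_map]

theorem natDegree_simplestCubic [Nontrivial R] (a : R) : (simplestCubic a).natDegree = 3 := by
  unfold simplestCubic; compute_degree!

theorem monic_simplestCubic [Nontrivial R] (a : R) : (simplestCubic a).Monic := by
  unfold simplestCubic; monicity!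

end CommRing

theorem not_isRoot_simplestCubic_int (a n : ℤ) : ¬ (simplestCubic a).IsRoot n := by
  intro hn
  rw [IsRoot, eval_simplestCubic] at hn
  have hunit : IsUnit n := isUnit_of_dvd_one ⟨n ^ 2 - a * n - (a + 3), by linear_combination -hn⟩
  rcases Int.isUnit_iff.mp hunit with rfl | rfl <;> omega

theorem irreducible_simplestCubic (a : ℤ) : Irreducible (simplestCubic (a : ℚ)) := by
  have hdeg := natDegree_simplestCubic (a : ℚ)
  rw [irreducible_iff_roots_eq_zero_of_degree_le_three (by omega) (by omega),
    Multiset.eq_zero_iff_forall_notMem]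
  intro r hr
  have hroot : aeval r (simplestCubic a) = 0 := by
    rw [aeval_simplestCubic, algebraMap_int_eq, eq_intCast]
    exact (mem_roots (monic_simplestCubic _).ne_zero).mp hr
  obtain ⟨n, rfl⟩ := isInteger_of_is_root_of_monic (monic_simplestCubic a) hroot
  apply not_isRoot_simplestCubic_int a n
  rwa [aeval_algebraMap_apply, algebraMap_int_eq, eq_intCast, Int.cast_eq_zero,
    coe_aeval_eq_eval] at hroot

section Field

variable {K : Type*} [Field K] {a x : K}

theorem ne_zero_of_isRoot_simplestCubic (hx : (simplestCubic a).IsRoot x) : x ≠ 0 := by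
  rintro rfl
  simp [IsRoot, eval_simplestCubic] at hx

theorem add_one_ne_zero_of_isRoot_simplestCubic (hx : (simplestCubic a).IsRoot x) :
    x + 1 ≠ 0 := by
  intro h
  rw [IsRoot, eval_simplestCubic, eq_neg_of_add_eq_zero_left h] at hx
  exact one_ne_zero (by linear_combination hx)

theorem simplestCubic_eq_prod_of_isRoot (hx : (simplestCubic a).IsRoot x) :
    simplestCubic a = (X - C x) * (X - C (-1 - x⁻¹)) * (X - C (-(x + 1)⁻¹)) := by
  have hx0 := ne_zero_of_isRoot_simplestCubic hx
  have hx1 := add_one_ne_zero_of_isRoot_simplestCubic hx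
  rw [IsRoot, eval_simplestCubic] at hx
  have hsum : x + (-1 - x⁻¹) + -(x + 1)⁻¹ = a := by
    field_simp; linear_combination hx
  have hpair : x * (-1 - x⁻¹) + x * -(x + 1)⁻¹ + (-1 - x⁻¹) * -(x + 1)⁻¹ = -(a + 3) := by
    field_simp; linear_combination -hx
  have hprod : x * (-1 - x⁻¹) * -(x + 1)⁻¹ = 1 := by
    field_simp; ring
  calc simplestCubic a
      = X ^ 3 - C (x + (-1 - x⁻¹) + -(x + 1)⁻¹) * X ^ 2
          + C (x * (-1 - x⁻¹) + x * -(x + 1)⁻¹ + (-1 - x⁻¹) * -(x + 1)⁻¹) * X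
          - C (x * (-1 - x⁻¹) * -(x + 1)⁻¹) := by
        rw [hsum, hpair, hprod, simplestCubic, map_neg, map_one]; ring
    _ = _ := by simp only [map_add, map_mul]; ring

theorem splits_simplestCubic_of_isRoot (hx : (simplestCubic a).IsRoot x) :
    (simplestCubic a).Splits := by
  rw [simplestCubic_eq_prod_of_isRoot hx]
  exact ((Splits.X_sub_C _).mul (Splits.X_sub_C _)).mul (Splits.X_sub_C _)

theorem isRoot_simplestCubic_neg_one_sub_inv (hx : (simplestCubic a).IsRoot x) :
    (simplestCubic a).IsRoot (-1 - x⁻¹) := by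
  rw [simplestCubic_eq_prod_of_isRoot hx]
  simp

theorem neg_one_sub_inv_ne_self_of_isRoot [CharZero K] {a : ℤ}
    (hx : (simplestCubic (a : K)).IsRoot x) : -1 - x⁻¹ ≠ x := by
  intro hfix
  have hx0 := ne_zero_of_isRoot_simplestCubic hx
  rw [IsRoot, eval_simplestCubic] at hx
  have hcyc : x ^ 2 + x + 1 = 0 := by
    field_simp at hfix; linear_combination -hfix
  have hlin : (a : K) - 3 * x = 0 := by
    linear_combination hx - (x - a - 1) * hcyc
  have hdisc : ((a ^ 2 + 3 * a + 9 : ℤ) : K) = 0 := by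
    push_cast; linear_combination 9 * hcyc + (3 * x + a + 3) * hlin
  have : a ^ 2 + 3 * a + 9 = 0 := by exact_mod_cast hdisc
  nlinarith [sq_nonneg (2 * a + 3)]

end Field

end Polynomial

namespace IntermediateField

variable {F E : Type*} [Field F] [Field E] [Algebra F E] {α : E}

theorem isGalois_adjoin_simple_of_splits (hα : IsIntegral F α) (hsep : IsSeparable F α)
    (hsplit : ((minpoly F α).map (algebraMap F F⟮α⟯)).Splits) : IsGalois F F⟮α⟯ := by
  have := adjoin.finiteDimensional hα
  refine IsGalois.of_card_aut_eq_finrank F F⟮α⟯ ?_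
  rw [Nat.card_congr (algEquivEquivAlgHom F F⟮α⟯).toEquiv,
    card_algHom_adjoin_integral F hα hsep hsplit, adjoin.finrank hα]

theorem exists_algEquiv_adjoin_simple_gen_eq (hα : IsIntegral F α) {β : F⟮α⟯}
    (hβ : aeval β (minpoly F α) = 0) :
    ∃ σ : F⟮α⟯ ≃ₐ[F] F⟮α⟯, σ (AdjoinSimple.gen F α) = β := by
  have := adjoin.finiteDimensional hα
  let φ := (algHomAdjoinIntegralEquiv F hα).symm ⟨β, mem_aroots.mpr ⟨minpoly.ne_zero hα, hβ⟩⟩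
  exact ⟨AlgEquiv.ofBijective φ φ.bijective, algHomAdjoinIntegralEquiv_symm_apply_gen F hα _⟩

end IntermediateField

/-- For every integer `a` and every complex root `ρ` of `f_a`, the field `K_a = ℚ(ρ)` is a
degree 3 Galois extension of `ℚ`, and `Gal(K_a/ℚ)` is cyclic of order 3, generated by the
automorphism `σ` determined by `σ(ρ) = -1 - 1/ρ`. -/
theorem simplest_cubic_galois (a : ℤ) (ρ : ℂ)
    (hρ : ρ ^ 3 - (a : ℂ) * ρ ^ 2 - ((a : ℂ) + 3) * ρ - 1 = 0) :
    Module.finrank ℚ ℚ⟮ρ⟯ = 3 ∧ IsGalois ℚ ℚ⟮ρ⟯ ∧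
    Nat.card (ℚ⟮ρ⟯ ≃ₐ[ℚ] ℚ⟮ρ⟯) = 3 ∧
    ∃ σ : ℚ⟮ρ⟯ ≃ₐ[ℚ] ℚ⟮ρ⟯,
      σ (AdjoinSimple.gen ℚ ρ) = -1 - (AdjoinSimple.gen ℚ ρ)⁻¹ ∧
      orderOf σ = 3 ∧
      ∀ τ : ℚ⟮ρ⟯ ≃ₐ[ℚ] ℚ⟮ρ⟯, τ ∈ Subgroup.zpowers σ := by
  have hroot : aeval ρ (simplestCubic (a : ℚ)) = 0 := by
    rwa [aeval_simplestCubic, map_intCast, eval_simplestCubic]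
  have hmin : minpoly ℚ ρ = simplestCubic (a : ℚ) :=
    (minpoly.eq_of_irreducible_of_monic (irreducible_simplestCubic a) hroot
      (monic_simplestCubic _)).symm
  have hint : IsIntegral ℚ ρ := ⟨_, monic_simplestCubic _, hroot⟩
  have hg : (simplestCubic (a : ℚ⟮ρ⟯)).IsRoot (AdjoinSimple.gen ℚ ρ) := by
    have := aeval_gen_minpoly ℚ ρ
    rwa [hmin, aeval_simplestCubic, map_intCast] at this
  have := adjoin.finiteDimensional hint
  have hdeg : Module.finrank ℚ ℚ⟮ρ⟯ = 3 := by
    rw [adjoin.finrank hint, hmin, natDegree_simplestCubic]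
  have hgal : IsGalois ℚ ℚ⟮ρ⟯ :=
    isGalois_adjoin_simple_of_splits hint (minpoly.irreducible hint).separable
      (by rw [hmin, simplestCubic_map]; exact splits_simplestCubic_of_isRoot hg)
  have hcard : Nat.card (ℚ⟮ρ⟯ ≃ₐ[ℚ] ℚ⟮ρ⟯) = 3 := (IsGalois.card_aut_eq_finrank ℚ ℚ⟮ρ⟯).trans hdeg
  obtain ⟨σ, hσ⟩ := exists_algEquiv_adjoin_simple_gen_eq hint <| by
    rw [hmin, aeval_simplestCubic, map_intCast]
    exact isRoot_simplestCubic_neg_one_sub_inv hg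
  have hσ1 : σ ≠ 1 := fun h ↦ neg_one_sub_inv_ne_self_of_isRoot hg (by rw [← hσ, h]; rfl)
  have : Fact (Nat.Prime 3) := ⟨Nat.prime_three⟩
  exact ⟨hdeg, hgal, hcard, σ, hσ, orderOf_eq_prime (hcard ▸ pow_card_eq_one') hσ1,
    fun _ ↦ mem_zpowers_of_prime_card hcard hσ1⟩
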